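/- Let a₁, a₂ ∈ ℝ, let U₃ : ℝ × ℝ → ℝ be smooth with V₃(t,X) = ∂U₃/∂X(t,X), and let x : ℝ → ℝ be smooth with compact support. Define the fractional Lagrange function with α = 1/2 by L(t, X, u, v, w) = U₃(t,X) − (a₁/2)u² + (a₂/2)v² − (1/2)w², where u, v, w stand for the jet coordinates y^{(1/2)} = D^{1/2}x, y^{(1)} = x′, y^{(3/2)} = D^{3/2}x. Then for every t ∈ ℝ the Euler–Lagrange expression of L along x satisfies ∂L/∂X − D^{1/2}[∂L/∂u] + d/dt[∂L/∂v] − D^{3/2}[∂L/∂w] (each partial derivative evaluated along s ↦ (s, x(s), (D^{1/2}x)(s), x′(s), (D^{3/2}x)(s)) and the outer derivatives taken at t) = V₃(t, x(t)) + a₁ x′(t) + a₂ x″(t) + x‴(t). Consequently, the third-order differential equation x‴(t) + a₂ x″(t) + a₁ x′(t) + V₃(t, x(t)) = 0 (which includes the nonhomogeneous business-cycle model with innovation) is the Euler–Lagrange equation of the fractional Lagrangian L with α = 1/2. -/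

import Mathlib

open MeasureTheory Set

/-- The left-sided Liouville fractional derivative of order `γ ∈ (0,1)`:
`(D^γ g)(t) = (1/Γ(1−γ)) · d/dt ∫_{−∞}^t g s · (t−s)^{−γ} ds`. -/
noncomputable def liouvilleDerivL (γ : ℝ) (g : ℝ → ℝ) (t : ℝ) : ℝ :=
  (1 / Real.Gamma (1 - γ)) * deriv (fun τ => ∫ s in Iic τ, g s * (τ - s) ^ (-γ)) t

/-- The Liouville fractional derivative of order `3/2`:
`(D^{3/2} x)(t) = (1/Γ(1/2)) · (d/dt)² ∫_{−∞}^t x s · (t−s)^{−1/2} ds`. -/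
noncomputable def liouvilleDeriv32 (x : ℝ → ℝ) (t : ℝ) : ℝ :=
  (1 / Real.Gamma (1 / 2)) *
    deriv (deriv (fun τ => ∫ s in Iic τ, x s * (τ - s) ^ (-(1 / 2 : ℝ)))) t

open scoped Convolution
open Real Filter ContinuousLinearMap

/-- The Abel kernel `u ↦ u^{-1/2}` for `u > 0`, `0` otherwise. -/
noncomputable def myk : ℝ → ℝ := fun u => if 0 < u then u ^ (-(1/2 : ℝ)) else 0

lemma myk_of_pos {u : ℝ} (h : 0 < u) : myk u = u ^ (-(1/2 : ℝ)) := if_pos h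

lemma myk_of_nonpos {u : ℝ} (h : u ≤ 0) : myk u = 0 := if_neg (not_lt.2 h)

lemma myk_nonneg (u : ℝ) : 0 ≤ myk u := by
  unfold myk; split
  · positivity
  · exact le_refl 0

lemma norm_myk : (fun u => ‖myk u‖) = myk :=
  funext fun u => by rw [Real.norm_eq_abs, abs_of_nonneg (myk_nonneg u)]

lemma myk_measurable : Measurable myk := by
  have h : Measurable fun u : ℝ => Real.exp (Real.log u * (-(1/2 : ℝ))) :=
    (Real.measurable_log.mul_const _).exp
  have e : myk = fun u => if 0 < u then Real.exp (Real.log u * (-(1/2 : ℝ))) else 0 := by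
    funext u; unfold myk; split
    · exact Real.rpow_def_of_pos (by assumption) _
    · rfl
  rw [e]
  exact Measurable.ite measurableSet_Ioi h measurable_const

lemma myk_locallyIntegrable : LocallyIntegrable myk volume := by
  rw [locallyIntegrable_iff]
  intro K hK
  obtain ⟨r, hr⟩ := hK.isBounded.subset_closedBall 0
  have hIcc : IntegrableOn myk (Metric.closedBall (0:ℝ) r) := by
    rw [Real.closedBall_eq_Icc]
    have h1 : IntervalIntegrable (fun x : ℝ => x ^ (-(1/2 : ℝ))) volume (0 - r) (0 + r) :=
      intervalIntegral.intervalIntegrable_rpow' (by norm_num)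
    have h2 : IntegrableOn (fun x : ℝ => x ^ (-(1/2 : ℝ))) (Icc (0 - r) (0 + r)) := by
      rcases le_or_gt (0 - r) (0 + r) with h | h
      · rw [intervalIntegrable_iff_integrableOn_Icc_of_le h] at h1
        exact h1
      · rw [Icc_eq_empty (not_le.2 h)]; simp
    refine (h2.norm.mono' ?_ ?_)
    · exact (myk_measurable.aestronglyMeasurable).restrict
    · refine ae_of_all _ fun u => ?_
      rw [Real.norm_eq_abs, abs_of_nonneg (myk_nonneg u)]
      unfold myk; split
      · exact le_abs_self _
      · positivity
  exact hIcc.mono_set hr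

lemma keyK (g : ℝ → ℝ) (τ : ℝ) :
    ∫ s in Iic τ, g s * (τ - s) ^ (-(1/2 : ℝ)) = (g ⋆[mul ℝ ℝ] myk) τ := by
  rw [convolution_def]
  simp only [mul_apply']
  rw [← setIntegral_eq_integral_of_forall_compl_eq_zero
    (s := Iic τ) (f := fun s => g s * myk (τ - s))]
  · refine setIntegral_congr_fun measurableSet_Iic fun s hs => ?_
    rcases (mem_Iic.mp hs).lt_or_eq with h | h
    · rw [myk_of_pos (by linarith)]
    · rw [h, sub_self, myk_of_nonpos le_rfl, Real.zero_rpow (by norm_num)]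
  · intro s hs
    rw [myk_of_nonpos (by simp only [mem_Iic, not_le] at hs; linarith), mul_zero]

lemma beta_half :
    ∫ v in (0:ℝ)..1, v ^ (-(1/2 : ℝ)) * (1 - v) ^ (-(1/2 : ℝ)) = π := by
  have h2 : (0:ℝ) < (1/2 : ℂ).re := by norm_num
  have hB := Complex.Gamma_mul_Gamma_eq_betaIntegral h2 h2
  have hsum : (1/2 + 1/2 : ℂ) = 1 := by norm_num
  rw [hsum, Complex.Gamma_one, one_mul, Complex.Gamma_one_half_eq] at hB
  have hpi : ((π:ℂ) ^ (1/2 : ℂ)) * ((π:ℂ) ^ (1/2 : ℂ)) = (π:ℂ) := by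
    rw [← Complex.cpow_add _ _ (by exact_mod_cast Real.pi_ne_zero), hsum, Complex.cpow_one]
  rw [hpi] at hB
  have hcongr : Complex.betaIntegral (1/2) (1/2)
      = ∫ v in (0:ℝ)..1, ((v ^ (-(1/2 : ℝ)) * (1 - v) ^ (-(1/2 : ℝ)) : ℝ) : ℂ) := by
    rw [Complex.betaIntegral]
    refine intervalIntegral.integral_congr fun v hv => ?_
    rw [uIcc_of_le (by norm_num : (0:ℝ) ≤ 1)] at hv
    obtain ⟨hv0, hv1⟩ := hv
    have e1 : ((1:ℂ)/2 - 1) = ((-(1/2 : ℝ) : ℝ) : ℂ) := by push_cast; ring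
    have e2 : (1 - (v:ℂ)) = ((1 - v : ℝ) : ℂ) := by push_cast; ring
    rw [e1, e2, ← Complex.ofReal_cpow hv0, ← Complex.ofReal_cpow (by linarith)]
    push_cast
    ring
  rw [hcongr, intervalIntegral.integral_ofReal] at hB
  exact_mod_cast hB.symm

lemma f01_integrable :
    IntervalIntegrable (fun v : ℝ => v ^ (-(1/2 : ℝ)) * (1 - v) ^ (-(1/2 : ℝ))) volume 0 1 := by
  have h2 : (0:ℝ) < (1/2 : ℂ).re := by norm_num
  have hconv := Complex.betaIntegral_convergent h2 h2
  have hnorm := hconv.norm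
  rw [intervalIntegrable_iff] at hnorm ⊢
  refine hnorm.congr ?_
  rw [uIoc_of_le (by norm_num : (0:ℝ) ≤ 1)]
  refine (ae_restrict_iff' measurableSet_Ioc).2 (ae_of_all _ fun v hv => ?_)
  obtain ⟨hv0, hv1⟩ := hv
  dsimp only
  have e1 : ((1:ℂ)/2 - 1) = ((-(1/2 : ℝ) : ℝ) : ℂ) := by push_cast; ring
  have e2 : (1 - (v:ℂ)) = ((1 - v : ℝ) : ℂ) := by push_cast; ring
  rw [e1, e2, ← Complex.ofReal_cpow hv0.le, ← Complex.ofReal_cpow (by linarith),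
    ← Complex.ofReal_mul, Complex.norm_real, Real.norm_eq_abs, abs_of_nonneg (mul_nonneg (Real.rpow_nonneg hv0.le _) (Real.rpow_nonneg (by linarith) _))]

/-- The step function `π · 1_{(0,∞)}`. -/
noncomputable def Hstep : ℝ → ℝ := fun u => if 0 < u then π else 0

lemma myk_conv_integrand_zero {u : ℝ} (hu : u ≤ 0) (s : ℝ) : myk s * myk (u - s) = 0 := by
  rcases le_or_gt s 0 with h | h
  · rw [myk_of_nonpos h, zero_mul]
  · rw [myk_of_nonpos (show u - s ≤ 0 by linarith), mul_zero]

lemma myk_integrand_eq {u : ℝ} (hu : 0 < u) :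
    (fun s => myk s * myk (u - s))
      = (Ioo 0 u).indicator (fun s => s ^ (-(1/2 : ℝ)) * (u - s) ^ (-(1/2 : ℝ))) := by
  funext s
  by_cases hs : s ∈ Ioo 0 u
  · rw [indicator_of_mem hs, myk_of_pos hs.1, myk_of_pos (by simp [sub_pos, hs.2])]
  · rw [indicator_of_notMem hs]
    simp only [mem_Ioo, not_and_or, not_lt] at hs
    rcases hs with h | h
    · rw [myk_of_nonpos h, zero_mul]
    · rw [myk_of_nonpos (show u - s ≤ 0 by linarith), mul_zero]

lemma scaled_integrand_eq {u : ℝ} (hu : 0 < u) : ∀ s ∈ uIcc (0:ℝ) u,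
    s ^ (-(1/2 : ℝ)) * (u - s) ^ (-(1/2 : ℝ))
      = u⁻¹ * ((u⁻¹ * s) ^ (-(1/2 : ℝ)) * (1 - u⁻¹ * s) ^ (-(1/2 : ℝ))) := by
  intro s hs
  rw [uIcc_of_le hu.le] at hs
  obtain ⟨hs0, hsu⟩ := hs
  have h1 : (1 : ℝ) - u⁻¹ * s = u⁻¹ * (u - s) := by field_simp
  rw [h1, Real.mul_rpow (by positivity) hs0, Real.mul_rpow (by positivity) (by linarith)]
  have h2 : u⁻¹ ^ (-(1/2 : ℝ)) * u⁻¹ ^ (-(1/2 : ℝ)) = u := by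
    rw [← Real.rpow_add (by positivity)]
    norm_num
    rw [Real.rpow_neg_one, inv_inv]
  have h3 : u⁻¹ * (u⁻¹ ^ (-(1/2 : ℝ)) * u⁻¹ ^ (-(1/2 : ℝ))) = 1 := by
    rw [h2]; exact inv_mul_cancel₀ hu.ne'
  symm
  calc u⁻¹ * ((u⁻¹ ^ (-(1/2 : ℝ)) * s ^ (-(1/2 : ℝ)))
          * (u⁻¹ ^ (-(1/2 : ℝ)) * (u - s) ^ (-(1/2 : ℝ))))
      = (u⁻¹ * (u⁻¹ ^ (-(1/2 : ℝ)) * u⁻¹ ^ (-(1/2 : ℝ))))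
          * (s ^ (-(1/2 : ℝ)) * (u - s) ^ (-(1/2 : ℝ))) := by ring
    _ = s ^ (-(1/2 : ℝ)) * (u - s) ^ (-(1/2 : ℝ)) := by rw [h3, one_mul]

lemma myk_integrandOn (u : ℝ) (hu : 0 < u) :
    IntegrableOn (fun s : ℝ => s ^ (-(1/2 : ℝ)) * (u - s) ^ (-(1/2 : ℝ))) (Ioo 0 u) volume := by
  have h1 : IntervalIntegrable
      (fun s : ℝ => u⁻¹ * ((u⁻¹ * s) ^ (-(1/2:ℝ)) * (1 - u⁻¹ * s) ^ (-(1/2:ℝ)))) volume 0 u := by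
    have h := (f01_integrable.comp_mul_left (c := u⁻¹)).const_mul u⁻¹
    have e0 : (0:ℝ) / u⁻¹ = 0 := by simp
    have e1 : (1:ℝ) / u⁻¹ = u := by field_simp
    rw [e0, e1] at h
    exact h
  rw [intervalIntegrable_iff_integrableOn_Ioo_of_le hu.le] at h1
  refine h1.congr_fun ?_ measurableSet_Ioo
  intro s hs
  exact (scaled_integrand_eq hu s (by
    rw [uIcc_of_le hu.le]; exact ⟨hs.1.le, hs.2.le⟩)).symm

lemma myk_convExistsAt (u : ℝ) :
    ConvolutionExistsAt myk myk u (ContinuousLinearMap.mul ℝ ℝ) volume := by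
  unfold ConvolutionExistsAt
  simp only [ContinuousLinearMap.mul_apply']
  rcases le_or_gt u 0 with hu | hu
  · have e : (fun s => myk s * myk (u - s)) = fun _ => (0:ℝ) :=
      funext fun s => myk_conv_integrand_zero hu s
    rw [e]; exact integrable_zero _ _ _
  · rw [myk_integrand_eq hu, integrable_indicator_iff measurableSet_Ioo]
    exact myk_integrandOn u hu

lemma myk_conv_myk : (myk ⋆[ContinuousLinearMap.mul ℝ ℝ] myk) = Hstep := by
  funext u
  rw [convolution_def]
  simp only [ContinuousLinearMap.mul_apply']
  rcases le_or_gt u 0 with hu | hu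
  · have e : (fun s => myk s * myk (u - s)) = fun _ => (0:ℝ) :=
      funext fun s => myk_conv_integrand_zero hu s
    rw [e, Hstep, if_neg (not_lt.2 hu)]
    simp
  · rw [myk_integrand_eq hu, integral_indicator measurableSet_Ioo]
    show _ = Hstep u
    rw [Hstep, if_pos hu, ← integral_Ioc_eq_integral_Ioo,
      ← intervalIntegral.integral_of_le hu.le,
      intervalIntegral.integral_congr (scaled_integrand_eq hu),
      intervalIntegral.integral_const_mul,
      intervalIntegral.integral_comp_mul_left (f := fun v => v ^ (-(1/2:ℝ)) * (1 - v) ^ (-(1/2:ℝ))) (inv_ne_zero hu.ne')]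
    rw [mul_zero, inv_mul_cancel₀ hu.ne', inv_inv, beta_half]
    rw [smul_eq_mul]
    field_simp

lemma Hstep_measurable : Measurable Hstep :=
  Measurable.ite measurableSet_Ioi measurable_const measurable_const

lemma conv_const_smul (c : ℝ) (f : ℝ → ℝ) (τ : ℝ) :
    ((fun s => c * f s) ⋆[ContinuousLinearMap.mul ℝ ℝ] myk) τ
      = c * (f ⋆[ContinuousLinearMap.mul ℝ ℝ] myk) τ := by
  rw [convolution_def, convolution_def]
  simp only [ContinuousLinearMap.mul_apply']
  rw [← integral_const_mul]
  simp_rw [mul_assoc]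

lemma conv_conv (g : ℝ → ℝ) (hg : Continuous g) (hgc : HasCompactSupport g) (τ : ℝ) :
    ((g ⋆[ContinuousLinearMap.mul ℝ ℝ] myk) ⋆[ContinuousLinearMap.mul ℝ ℝ] myk) τ
      = π * ∫ s in Iic τ, g s := by
  have hfg : ∀ᵐ y : ℝ, ConvolutionExistsAt g myk y (ContinuousLinearMap.mul ℝ ℝ) volume :=
    Filter.Eventually.of_forall (hgc.convolutionExists_left _ hg myk_locallyIntegrable)
  have hgk : ∀ᵐ x : ℝ, ConvolutionExistsAt (fun u => ‖myk u‖) (fun u => ‖myk u‖) x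
      (ContinuousLinearMap.mul ℝ ℝ) volume := by
    rw [norm_myk]
    exact Filter.Eventually.of_forall myk_convExistsAt
  have hfgk : ConvolutionExistsAt (fun u => ‖g u‖)
      ((fun u => ‖myk u‖) ⋆[ContinuousLinearMap.mul ℝ ℝ, volume] fun u => ‖myk u‖) τ
      (ContinuousLinearMap.mul ℝ ℝ) volume := by
    rw [norm_myk]
    unfold ConvolutionExistsAt
    simp only [ContinuousLinearMap.mul_apply', myk_conv_myk]
    have e : (fun t : ℝ => ‖g t‖ * Hstep (τ - t)) = fun t => Hstep (τ - t) * ‖g t‖ := by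
      funext t; ring
    rw [e]
    refine Integrable.bdd_mul (c := π) ?_ ?_ ?_
    · exact (hg.norm.integrable_of_hasCompactSupport hgc.norm)
    · exact (Hstep_measurable.comp (measurable_const.sub measurable_id)).aestronglyMeasurable
    · refine ae_of_all _ fun t => ?_
      rw [Real.norm_eq_abs, Hstep]
      split
      · rw [abs_of_nonneg Real.pi_pos.le]
      · rw [abs_zero]; exact Real.pi_pos.le
  rw [convolution_assoc (ContinuousLinearMap.mul ℝ ℝ) (ContinuousLinearMap.mul ℝ ℝ)
    (ContinuousLinearMap.mul ℝ ℝ) (ContinuousLinearMap.mul ℝ ℝ) mul_assoc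
    hg.aestronglyMeasurable myk_measurable.aestronglyMeasurable
    myk_measurable.aestronglyMeasurable hfg hgk hfgk]
  rw [myk_conv_myk, convolution_def]
  simp only [ContinuousLinearMap.mul_apply']
  have e : ∀ s : ℝ, g s * Hstep (τ - s) = (Iio τ).indicator (fun s => π * g s) s := by
    intro s
    by_cases h : s < τ
    · rw [Hstep, if_pos (sub_pos.mpr h), indicator_of_mem (show s ∈ Iio τ from h)]
      ring
    · rw [Hstep, if_neg (fun hc => h (by linarith [sub_pos.mp hc])),
        indicator_of_notMem (show s ∉ Iio τ from h), mul_zero]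
  simp_rw [e]
  rw [integral_indicator measurableSet_Iio, integral_const_mul, integral_Iic_eq_integral_Iio]

lemma deriv_conv (g : ℝ → ℝ) (hg : ContDiff ℝ (⊤ : ℕ∞) g) (hgc : HasCompactSupport g) :
    deriv (g ⋆[ContinuousLinearMap.mul ℝ ℝ] myk)
      = deriv g ⋆[ContinuousLinearMap.mul ℝ ℝ] myk :=
  funext fun t =>
    (hgc.hasDerivAt_convolution_left _ (hg.of_le (by norm_num)) myk_locallyIntegrable t).deriv

lemma deriv_K_eq (g : ℝ → ℝ) (hg : ContDiff ℝ (⊤ : ℕ∞) g) (hgc : HasCompactSupport g) :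
    deriv (fun τ => ∫ s in Iic τ, g s * (τ - s) ^ (-(1/2 : ℝ)))
      = deriv g ⋆[ContinuousLinearMap.mul ℝ ℝ] myk := by
  rw [funext (keyK g)]
  exact deriv_conv g hg hgc

lemma D_half_eq (x : ℝ → ℝ) (hx : ContDiff ℝ (⊤ : ℕ∞) x) (hxc : HasCompactSupport x) :
    liouvilleDerivL (1/2) x
      = fun t => (Real.sqrt π)⁻¹ * ((deriv x ⋆[ContinuousLinearMap.mul ℝ ℝ] myk) t) := by
  funext t
  rw [liouvilleDerivL]
  rw [show (1:ℝ) - 1/2 = 1/2 by norm_num, Real.Gamma_one_half_eq,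
    deriv_K_eq x hx hxc, one_div]

lemma D_half_half (x : ℝ → ℝ) (hx : ContDiff ℝ (⊤ : ℕ∞) x) (hxc : HasCompactSupport x) (t : ℝ) :
    liouvilleDerivL (1/2) (liouvilleDerivL (1/2) x) t = deriv x t := by
  have hx1 : ContDiff ℝ (⊤ : ℕ∞) (deriv x) := (contDiff_infty_iff_deriv.mp hx).2
  have hxc1 : HasCompactSupport (deriv x) := hxc.deriv
  have hsp : Real.sqrt π ≠ 0 := by positivity
  have h1 : (fun τ => ∫ s in Iic τ, liouvilleDerivL (1/2) x s * (τ - s) ^ (-(1/2:ℝ)))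
      = fun τ => ((Real.sqrt π)⁻¹ * π) * x τ := by
    funext τ
    rw [keyK, D_half_eq x hx hxc, conv_const_smul, conv_conv (deriv x) hx1.continuous hxc1 τ,
      HasCompactSupport.integral_Iic_deriv_eq (hx.of_le (by norm_num)) hxc τ]
    ring
  rw [liouvilleDerivL, h1, deriv_const_mul_field,
    show (1:ℝ) - 1/2 = 1/2 by norm_num, Real.Gamma_one_half_eq]
  have hππ : Real.sqrt π * Real.sqrt π = π := Real.mul_self_sqrt Real.pi_pos.le
  field_simp
  rw [Real.sq_sqrt Real.pi_pos.le]

lemma D32_eq (x : ℝ → ℝ) (hx : ContDiff ℝ (⊤ : ℕ∞) x) (hxc : HasCompactSupport x) :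
    liouvilleDeriv32 x
      = fun t => (Real.sqrt π)⁻¹
          * ((deriv (deriv x) ⋆[ContinuousLinearMap.mul ℝ ℝ] myk) t) := by
  have hx1 : ContDiff ℝ (⊤ : ℕ∞) (deriv x) := (contDiff_infty_iff_deriv.mp hx).2
  funext t
  rw [liouvilleDeriv32, Real.Gamma_one_half_eq, deriv_K_eq x hx hxc,
    deriv_conv (deriv x) hx1 hxc.deriv, one_div]

lemma D32_32 (x : ℝ → ℝ) (hx : ContDiff ℝ (⊤ : ℕ∞) x) (hxc : HasCompactSupport x) (t : ℝ) :
    liouvilleDeriv32 (liouvilleDeriv32 x) t = deriv (deriv (deriv x)) t := by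
  have hx1 : ContDiff ℝ (⊤ : ℕ∞) (deriv x) := (contDiff_infty_iff_deriv.mp hx).2
  have hx2 : ContDiff ℝ (⊤ : ℕ∞) (deriv (deriv x)) := (contDiff_infty_iff_deriv.mp hx1).2
  have hxc1 : HasCompactSupport (deriv x) := hxc.deriv
  have hxc2 : HasCompactSupport (deriv (deriv x)) := hxc1.deriv
  have hsp : Real.sqrt π ≠ 0 := by positivity
  have h1 : (fun τ => ∫ s in Iic τ, liouvilleDeriv32 x s * (τ - s) ^ (-(1/2:ℝ)))
      = fun τ => ((Real.sqrt π)⁻¹ * π) * deriv x τ := by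
    funext τ
    rw [keyK, D32_eq x hx hxc, conv_const_smul,
      conv_conv (deriv (deriv x)) hx2.continuous hxc2 τ,
      HasCompactSupport.integral_Iic_deriv_eq (hx1.of_le (by norm_num)) hxc1 τ]
    ring
  rw [liouvilleDeriv32, h1, deriv_const_mul_field', deriv_const_mul_field,
    Real.Gamma_one_half_eq]
  have hππ : Real.sqrt π * Real.sqrt π = π := Real.mul_self_sqrt Real.pi_pos.le
  field_simp
  rw [Real.sq_sqrt Real.pi_pos.le]

lemma liouvilleDerivL_const_mul (γ c : ℝ) (g : ℝ → ℝ) (t : ℝ) :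
    liouvilleDerivL γ (fun s => c * g s) t = c * liouvilleDerivL γ g t := by
  unfold liouvilleDerivL
  have e : (fun τ => ∫ s in Iic τ, (c * g s) * (τ - s) ^ (-γ))
      = fun τ => c * ∫ s in Iic τ, g s * (τ - s) ^ (-γ) := by
    funext τ
    rw [← integral_const_mul]
    simp_rw [mul_assoc]
  rw [e, deriv_const_mul_field]
  ring

lemma liouvilleDeriv32_const_mul (c : ℝ) (g : ℝ → ℝ) (t : ℝ) :
    liouvilleDeriv32 (fun s => c * g s) t = c * liouvilleDeriv32 g t := by
  unfold liouvilleDeriv32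
  have e : (fun τ => ∫ s in Iic τ, (c * g s) * (τ - s) ^ (-(1/2 : ℝ)))
      = fun τ => c * ∫ s in Iic τ, g s * (τ - s) ^ (-(1/2 : ℝ)) := by
    funext τ
    rw [← integral_const_mul]
    simp_rw [mul_assoc]
  rw [e, deriv_const_mul_field', deriv_const_mul_field]
  ring

theorem third_order_ode_has_fractional_lagrangian
    (a₁ a₂ : ℝ)
    (U₃ : ℝ → ℝ → ℝ) (hU₃ : ContDiff ℝ (⊤ : ℕ∞) (Function.uncurry U₃))
    (V₃ : ℝ → ℝ → ℝ) (hV₃ : ∀ t X, V₃ t X = deriv (fun X' => U₃ t X') X)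
    (x : ℝ → ℝ) (hx : ContDiff ℝ (⊤ : ℕ∞) x) (hxc : HasCompactSupport x)
    (L : ℝ → ℝ → ℝ → ℝ → ℝ → ℝ)
    (hL : L = fun t X u v w =>
      U₃ t X - (a₁ / 2) * u ^ 2 + (a₂ / 2) * v ^ 2 - (1 / 2) * w ^ 2) :
    (∀ t : ℝ,
        deriv (fun X => L t X (liouvilleDerivL (1 / 2) x t) (deriv x t)
            (liouvilleDeriv32 x t)) (x t)
          - liouvilleDerivL (1 / 2)
              (fun s => deriv (fun u => L s (x s) u (deriv x s) (liouvilleDeriv32 x s))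
                (liouvilleDerivL (1 / 2) x s)) t
          + deriv (fun s => deriv (fun v => L s (x s) (liouvilleDerivL (1 / 2) x s) v
              (liouvilleDeriv32 x s)) (deriv x s)) t
          - liouvilleDeriv32
              (fun s => deriv (fun w => L s (x s) (liouvilleDerivL (1 / 2) x s) (deriv x s) w)
                (liouvilleDeriv32 x s)) t
        = V₃ t (x t) + a₁ * deriv x t + a₂ * deriv (deriv x) t + deriv (deriv (deriv x)) t) ∧
      ((∀ t : ℝ,
        deriv (fun X => L t X (liouvilleDerivL (1 / 2) x t) (deriv x t)
            (liouvilleDeriv32 x t)) (x t)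
          - liouvilleDerivL (1 / 2)
              (fun s => deriv (fun u => L s (x s) u (deriv x s) (liouvilleDeriv32 x s))
                (liouvilleDerivL (1 / 2) x s)) t
          + deriv (fun s => deriv (fun v => L s (x s) (liouvilleDerivL (1 / 2) x s) v
              (liouvilleDeriv32 x s)) (deriv x s)) t
          - liouvilleDeriv32
              (fun s => deriv (fun w => L s (x s) (liouvilleDerivL (1 / 2) x s) (deriv x s) w)
                (liouvilleDeriv32 x s)) t = 0) ↔
        (∀ t : ℝ,
          deriv (deriv (deriv x)) t + a₂ * deriv (deriv x) t + a₁ * deriv x t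
            + V₃ t (x t) = 0)) := by
  have hxs : ContDiff ℝ (⊤ : ℕ∞) x := hx.of_le (by simp)
  have hEL : ∀ t : ℝ,
      deriv (fun X => L t X (liouvilleDerivL (1 / 2) x t) (deriv x t)
          (liouvilleDeriv32 x t)) (x t)
        - liouvilleDerivL (1 / 2)
            (fun s => deriv (fun u => L s (x s) u (deriv x s) (liouvilleDeriv32 x s))
              (liouvilleDerivL (1 / 2) x s)) t
        + deriv (fun s => deriv (fun v => L s (x s) (liouvilleDerivL (1 / 2) x s) v
            (liouvilleDeriv32 x s)) (deriv x s)) t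
        - liouvilleDeriv32
            (fun s => deriv (fun w => L s (x s) (liouvilleDerivL (1 / 2) x s) (deriv x s) w)
              (liouvilleDeriv32 x s)) t
      = V₃ t (x t) + a₁ * deriv x t + a₂ * deriv (deriv x) t + deriv (deriv (deriv x)) t := by
    intro t
    have e1 : deriv (fun X => L t X (liouvilleDerivL (1 / 2) x t) (deriv x t)
        (liouvilleDeriv32 x t)) (x t) = V₃ t (x t) := by
      simp only [hL]
      rw [deriv_sub_const, deriv_add_const, deriv_sub_const, hV₃]
    have e2 : (fun s => deriv (fun u => L s (x s) u (deriv x s) (liouvilleDeriv32 x s))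
        (liouvilleDerivL (1 / 2) x s)) = fun s => (-a₁) * liouvilleDerivL (1 / 2) x s := by
      funext s
      simp only [hL]
      rw [deriv_sub_const, deriv_add_const, deriv_const_sub, deriv_const_mul_field, deriv_pow_field]
      push_cast
      ring
    have e3 : (fun s => deriv (fun v => L s (x s) (liouvilleDerivL (1 / 2) x s) v
        (liouvilleDeriv32 x s)) (deriv x s)) = fun s => a₂ * deriv x s := by
      funext s
      simp only [hL]
      rw [deriv_sub_const, deriv_const_add, deriv_const_mul_field, deriv_pow_field]
      push_cast
      ring
    have e4 : (fun s => deriv (fun w => L s (x s) (liouvilleDerivL (1 / 2) x s) (deriv x s) w)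
        (liouvilleDeriv32 x s)) = fun s => (-1 : ℝ) * liouvilleDeriv32 x s := by
      funext s
      simp only [hL]
      rw [deriv_const_sub, deriv_const_mul_field, deriv_pow_field]
      push_cast
      ring
    have t2 : liouvilleDerivL (1 / 2)
        (fun s => deriv (fun u => L s (x s) u (deriv x s) (liouvilleDeriv32 x s))
          (liouvilleDerivL (1 / 2) x s)) t = (-a₁) * deriv x t := by
      rw [e2, liouvilleDerivL_const_mul, D_half_half x hxs hxc t]
    have t3 : deriv (fun s => deriv (fun v => L s (x s) (liouvilleDerivL (1 / 2) x s) v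
        (liouvilleDeriv32 x s)) (deriv x s)) t = a₂ * deriv (deriv x) t := by
      rw [e3, deriv_const_mul_field]
    have t4 : liouvilleDeriv32
        (fun s => deriv (fun w => L s (x s) (liouvilleDerivL (1 / 2) x s) (deriv x s) w)
          (liouvilleDeriv32 x s)) t = (-1 : ℝ) * deriv (deriv (deriv x)) t := by
      rw [e4, liouvilleDeriv32_const_mul, D32_32 x hxs hxc t]
    rw [e1, t2, t3, t4]
    ring
  refine ⟨hEL, ?_⟩
  constructor
  · intro h t
    have h1 := hEL t
    have h2 := h t
    linarith
  · intro h t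
    have h1 := hEL t
    have h2 := h t
    linarith
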